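/- Let P be a finite poset with unique minimal element and unique maximal element, and fix a nonempty proper order ideal I of P. Then there is a bijection, preserving orbits of the dihedral group generated by the odd and even promotion operators on linear extensions, between the set of pairs (p, L) with L a linear extension of P and p an I-descent of L, and the set of linear extensions of P. In particular, the number of I-descents is homomesic with expected value one on each orbit. -/

import Mathlib

open scoped Classical
noncomputable section

variable {P : Type*} [Fintype P] [PartialOrder P]

/-- A linear extension of the finite poset `P` with `n` elements: a bijective
labeling by `{1, …, n}` that is strictly order-preserving. -/
def IsLinExt (L : P → ℕ) : Prop :=
  Set.BijOn L Set.univ (Set.Icc 1 (Fintype.card P)) ∧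
  ∀ x y : P, x < y → L x < L y

/-- `p` is an `I`-descent of `L`: `p ∈ I` is covered by some `q ∉ I` with
`L q = L p + 1`. -/
def IDescent (I : Set P) (L : P → ℕ) (p : P) : Prop :=
  p ∈ I ∧ ∃ q : P, q ∉ I ∧ p ⋖ q ∧ L q = L p + 1

/-- Swap the labels `i` and `i+1` in `L`. -/
def swapL (i : ℕ) (L : P → ℕ) : P → ℕ :=
  fun x => if L x = i then i + 1 else if L x = i + 1 then i else L x

/-- `τᵢ`: interchange the elements labeled `i` and `i+1` if the result is again a
linear extension; otherwise do nothing. -/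
def tauL (i : ℕ) (L : P → ℕ) : P → ℕ :=
  if IsLinExt (swapL i L) then swapL i L else L

/-- The odd promotion operator `τₒ = ∏_{i odd} τᵢ` on linear extensions. -/
def tauLO (L : P → ℕ) : P → ℕ :=
  ((List.range' 1 (Fintype.card P - 1)).filter (fun i => i % 2 = 1)).foldl
    (fun s i => tauL i s) L

/-- The even promotion operator `τₑ = ∏_{i even} τᵢ` on linear extensions. -/
def tauLE (L : P → ℕ) : P → ℕ :=
  ((List.range' 1 (Fintype.card P - 1)).filter (fun i => i % 2 = 0)).foldl
    (fun s i => tauL i s) L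

/-- The orbit of a linear extension under the dihedral group `⟨τₒ, τₑ⟩`. -/
def OrbitL (L : P → ℕ) : Set (P → ℕ) :=
  {L' | Relation.ReflTransGen (fun a b => b = tauLO a ∨ b = tauLE a) L L'}

section Basic
variable {L : P → ℕ} {i : ℕ} {x y : P}

lemma linext_inj (h : IsLinExt L) : Function.Injective L := by
  intro a b hab
  exact h.1.2.1 (Set.mem_univ a) (Set.mem_univ b) hab

lemma linext_mem (h : IsLinExt L) (x : P) : L x ∈ Set.Icc 1 (Fintype.card P) :=
  h.1.1 (Set.mem_univ x)

lemma linext_surj (h : IsLinExt L) {i : ℕ} (hi : i ∈ Set.Icc 1 (Fintype.card P)) :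
    ∃ x, L x = i := by
  obtain ⟨x, -, hx⟩ := h.1.2.2 hi
  exact ⟨x, hx⟩

lemma swapL_eq_comp (i : ℕ) (L : P → ℕ) :
    swapL i L = (Equiv.swap i (i+1)) ∘ L := by
  funext z
  simp [swapL, Equiv.swap_apply_def]

lemma not_lt_of_labels (h : IsLinExt L) (hx : L x = i) (hy : L y = i + 1) : ¬ y < x := by
  intro hlt
  have := h.2 y x hlt
  omega

lemma covby_of_labels (h : IsLinExt L) (hx : L x = i) (hy : L y = i + 1) (hxy : x < y) :
    x ⋖ y := by
  refine ⟨hxy, ?_⟩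
  intro z hz1 hz2
  have h1 := h.2 x z hz1
  have h2 := h.2 z y hz2
  omega

lemma swapL_apply_x (hx : L x = i) : swapL i L x = i + 1 := by
  simp [swapL, hx]

lemma swapL_apply_y (hy : L y = i + 1) : swapL i L y = i := by
  have : L y ≠ i := by omega
  simp [swapL, hy, this]

lemma swapL_apply_other {z : P} (h1 : L z ≠ i) (h2 : L z ≠ i + 1) : swapL i L z = L z := by
  simp [swapL, h1, h2]

lemma isLinExt_swap_of (h : IsLinExt L) (hx : L x = i) (hy : L y = i + 1)
    (hxy : ¬ x < y) : IsLinExt (swapL i L) := by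
  constructor
  · rw [swapL_eq_comp]
    have hi : i ∈ Set.Icc 1 (Fintype.card P) := hx ▸ linext_mem h x
    have hi1 : i + 1 ∈ Set.Icc 1 (Fintype.card P) := hy ▸ linext_mem h y
    refine Set.BijOn.comp (g := ⇑(Equiv.swap i (i+1))) ?_ h.1
    refine ⟨?_, (Equiv.injective _).injOn, ?_⟩
    · intro z hz
      rcases eq_or_ne z i with rfl | h1
      · simpa [Equiv.swap_apply_left] using hi1
      rcases eq_or_ne z (i+1) with rfl | h2
      · simpa [Equiv.swap_apply_right] using hi
      · rwa [Equiv.swap_apply_of_ne_of_ne h1 h2]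
    · intro z hz
      refine ⟨Equiv.swap i (i+1) z, ?_, Equiv.swap_apply_self _ _ z⟩
      rcases eq_or_ne z i with rfl | h1
      · simpa [Equiv.swap_apply_left] using hi1
      rcases eq_or_ne z (i+1) with rfl | h2
      · simpa [Equiv.swap_apply_right] using hi
      · rwa [Equiv.swap_apply_of_ne_of_ne h1 h2]
  · intro a b hab
    have hinj := linext_inj h
    have hLab := h.2 a b hab
    rcases eq_or_ne (L a) i with ha | ha
    · -- a = x
      have hax : a = x := hinj (ha.trans hx.symm)
      have hbne : L b ≠ i + 1 := by
        intro hb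
        exact hxy (hax ▸ (hinj (hb.trans hy.symm)) ▸ hab)
      have hbne' : L b ≠ i := by omega
      rw [swapL_apply_x ha, swapL_apply_other hbne' hbne]
      omega
    rcases eq_or_ne (L a) (i+1) with ha' | ha'
    · -- a = y
      have hbne : L b ≠ i := by omega
      have hbne' : L b ≠ i + 1 := by omega
      rw [swapL_apply_y ha', swapL_apply_other hbne hbne']
      omega
    rcases eq_or_ne (L b) i with hb | hb
    · rw [swapL_apply_other ha ha', swapL_apply_x hb]
      omega
    rcases eq_or_ne (L b) (i+1) with hb' | hb'
    · -- b = y, need L a < i, i.e. L a ≠ i which holds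
      rw [swapL_apply_other ha ha', swapL_apply_y hb']
      omega
    · rw [swapL_apply_other ha ha', swapL_apply_other hb hb']
      exact hLab

lemma not_isLinExt_swap (h : IsLinExt L) (hx : L x = i) (hy : L y = i + 1)
    (hxy : x < y) : ¬ IsLinExt (swapL i L) := by
  intro hs
  have := hs.2 x y hxy
  rw [swapL_apply_x hx, swapL_apply_y hy] at this
  omega

lemma tauL_of_lt (h : IsLinExt L) (hx : L x = i) (hy : L y = i + 1) (hxy : x < y) :
    tauL i L = L := by
  rw [tauL, if_neg (not_isLinExt_swap h hx hy hxy)]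

lemma tauL_of_not_lt (h : IsLinExt L) (hx : L x = i) (hy : L y = i + 1) (hxy : ¬ x < y) :
    tauL i L = swapL i L := by
  rw [tauL, if_pos (isLinExt_swap_of h hx hy hxy)]

lemma tauL_isLinExt (h : IsLinExt L) : IsLinExt (tauL i L) := by
  rw [tauL]; split <;> first | assumption | exact h

lemma tauL_apply_other {z : P} (h1 : L z ≠ i) (h2 : L z ≠ i + 1) : tauL i L z = L z := by
  rw [tauL]; split
  · exact swapL_apply_other h1 h2
  · rfl

end Basic

section Fold
variable {L : P → ℕ} {i : ℕ} {x y : P}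

/-- fold of tau over a list -/
def tfold (l : List ℕ) (L : P → ℕ) : P → ℕ := l.foldl (fun s j => tauL j s) L

lemma tfold_nil (L : P → ℕ) : tfold [] L = L := rfl

lemma tfold_cons (j : ℕ) (l : List ℕ) (L : P → ℕ) :
    tfold (j :: l) L = tfold l (tauL j L) := rfl

lemma tfold_append (l₁ l₂ : List ℕ) (L : P → ℕ) :
    tfold (l₁ ++ l₂) L = tfold l₂ (tfold l₁ L) := by
  simp [tfold, List.foldl_append]

lemma tfold_isLinExt (l : List ℕ) (h : IsLinExt L) : IsLinExt (tfold l L) := by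
  induction l generalizing L with
  | nil => exact h
  | cons j l ih => exact ih (tauL_isLinExt h)

lemma tfold_apply_other {z : P} (l : List ℕ)
    (H : ∀ j ∈ l, L z ≠ j ∧ L z ≠ j + 1) : tfold l L z = L z := by
  induction l generalizing L with
  | nil => rfl
  | cons j l ih =>
    rw [tfold_cons]
    have h1 := (H j (by simp)).1
    have h2 := (H j (by simp)).2
    have hz : tauL j L z = L z := tauL_apply_other h1 h2
    rw [show tfold l (tauL j L) z = tauL j L z from ih (fun k hk => by
      rw [hz]; exact H k (by simp [hk])), hz]

/-- Key pair lemma: through the fold, the elements labeled `i`, `i+1` are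
only affected by `tauL i`. -/
lemma tfold_pair {l : List ℕ} (hnd : l.Nodup) (hi : i ∈ l)
    (hsep : ∀ j ∈ l, j ≠ i → j ≠ i + 1 ∧ j + 1 ≠ i)
    (h : IsLinExt L) (hx : L x = i) (hy : L y = i + 1) :
    if x < y then (tfold l L x = i ∧ tfold l L y = i + 1)
    else (tfold l L x = i + 1 ∧ tfold l L y = i) := by
  obtain ⟨l₁, l₂, rfl⟩ := List.append_of_mem hi
  have hnd' := hnd
  rw [List.nodup_append] at hnd'
  have hil₁ : i ∉ l₁ := fun h' => hnd'.2.2 i h' i (by simp) rfl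
  have hil₂ : i ∉ l₂ := (List.nodup_cons.mp hnd'.2.1).1
  set M := tfold l₁ L with hM
  have hMlin : IsLinExt M := tfold_isLinExt _ h
  have hMx : M x = i := by
    rw [hM, tfold_apply_other l₁]
    · exact hx
    · intro j hj
      have hji : j ≠ i := fun h' => hil₁ (h' ▸ hj)
      have := hsep j (by simp [hj]) hji
      omega
  have hMy : M y = i + 1 := by
    rw [hM, tfold_apply_other l₁]
    · exact hy
    · intro j hj
      have hji : j ≠ i := fun h' => hil₁ (h' ▸ hj)
      have := hsep j (by simp [hj]) hji
      omega
  have hrest : ∀ (N : P → ℕ) (z : P), N z = i ∨ N z = i + 1 → tfold l₂ N z = N z := by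
    intro N z hz
    apply tfold_apply_other
    intro j hj
    have hji : j ≠ i := fun h' => hil₂ (h' ▸ hj)
    have := hsep j (by simp [hj]) hji
    omega
  rw [tfold_append, ← hM, tfold_cons]
  split
  case isTrue hlt =>
    have : tauL i M = M := tauL_of_lt hMlin hMx hMy hlt
    rw [this]
    exact ⟨(hrest M x (Or.inl hMx)).trans hMx, (hrest M y (Or.inr hMy)).trans hMy⟩
  case isFalse hlt =>
    have heq : tauL i M = swapL i M := tauL_of_not_lt hMlin hMx hMy hlt
    have hx' : tauL i M x = i + 1 := by rw [heq]; exact swapL_apply_x hMx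
    have hy' : tauL i M y = i := by rw [heq]; exact swapL_apply_y hMy
    exact ⟨(hrest _ x (Or.inr hx')).trans hx', (hrest _ y (Or.inl hy')).trans hy'⟩

end Fold

section Invol
variable {L : P → ℕ} {i : ℕ} {x y : P}

lemma tfold_tfold {l : List ℕ} (hnd : l.Nodup)
    (hsep2 : ∀ i ∈ l, ∀ j ∈ l, j ≠ i → j ≠ i + 1 ∧ j + 1 ≠ i)
    (hrange : ∀ i ∈ l, 1 ≤ i ∧ i + 1 ≤ Fintype.card P)
    (h : IsLinExt L) : tfold l (tfold l L) = L := by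
  funext z
  set T := tfold l L with hT
  have hTlin : IsLinExt T := tfold_isLinExt _ h
  by_cases hz : ∃ i ∈ l, L z = i ∨ L z = i + 1
  · obtain ⟨i, hil, hzi⟩ := hz
    rcases hzi with hzi | hzi
    · -- z is labeled i; find partner labeled i+1
      obtain ⟨y, hy⟩ := linext_surj h (show i + 1 ∈ Set.Icc 1 (Fintype.card P) by
        have := hrange i hil; simp; omega)
      have hP1 := tfold_pair hnd hil (hsep2 i hil) h hzi hy
      have hnlt : ¬ y < z := not_lt_of_labels h hzi hy
      by_cases hlt : z < y
      · rw [if_pos hlt] at hP1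
        have hP2 := tfold_pair hnd hil (hsep2 i hil) hTlin hP1.1 hP1.2
        rw [if_pos hlt] at hP2
        rw [hP2.1, hzi]
      · rw [if_neg hlt] at hP1
        -- in T: y labeled i, z labeled i+1
        have hP2 := tfold_pair hnd hil (hsep2 i hil) hTlin hP1.2 hP1.1
        rw [if_neg hnlt] at hP2
        rw [hP2.2, hzi]
    · -- z is labeled i+1; find partner labeled i
      obtain ⟨x, hx⟩ := linext_surj h (show i ∈ Set.Icc 1 (Fintype.card P) by
        have := hrange i hil; simp; omega)
      have hP1 := tfold_pair hnd hil (hsep2 i hil) h hx hzi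
      have hnlt : ¬ z < x := not_lt_of_labels h hx hzi
      by_cases hlt : x < z
      · rw [if_pos hlt] at hP1
        have hP2 := tfold_pair hnd hil (hsep2 i hil) hTlin hP1.1 hP1.2
        rw [if_pos hlt] at hP2
        rw [hP2.2, hzi]
      · rw [if_neg hlt] at hP1
        -- in T: z labeled i, x labeled i+1
        have hP2 := tfold_pair hnd hil (hsep2 i hil) hTlin hP1.2 hP1.1
        rw [if_neg hnlt] at hP2
        rw [hP2.1, hzi]
  · push_neg at hz
    have h1 : T z = L z := tfold_apply_other l (fun j hj => by
      rcases hz j hj with ⟨a, b⟩; exact ⟨a, b⟩)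
    have h2 : tfold l T z = T z := tfold_apply_other l (fun j hj => by
      rw [h1]; rcases hz j hj with ⟨a, b⟩; exact ⟨a, b⟩)
    rw [h2, h1]

end Invol

section Charge
variable (I : Set P)

/-- indicator that the element labeled `i` lies in `I` -/
def betaI (L : P → ℕ) (i : ℕ) : ℤ := if ∃ x ∈ I, L x = i then 1 else 0

/-- there is an `I`-descent between labels `i` and `i+1` -/
def DescAt (L : P → ℕ) (i : ℕ) : Prop :=
  ∃ x y : P, L x = i ∧ L y = i + 1 ∧ x ∈ I ∧ y ∉ I ∧ x < y

def deltaI (L : P → ℕ) (i : ℕ) : ℤ := if DescAt I L i then 1 else 0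

variable {I}
variable {L : P → ℕ} {i : ℕ} {x y : P}

lemma betaI_eq (h : IsLinExt L) (hx : L x = i) :
    betaI I L i = if x ∈ I then 1 else 0 := by
  unfold betaI
  congr 1
  simp only [eq_iff_iff]
  constructor
  · rintro ⟨z, hzI, hz⟩
    rwa [← linext_inj h (hz.trans hx.symm)]
  · intro hxI
    exact ⟨x, hxI, hx⟩

lemma descAt_iff (h : IsLinExt L) (hx : L x = i) (hy : L y = i + 1) :
    DescAt I L i ↔ (x ∈ I ∧ y ∉ I ∧ x < y) := by
  constructor
  · rintro ⟨p, q, hp, hq, hpI, hqI, hpq⟩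
    rw [← linext_inj h (hp.trans hx.symm), ← linext_inj h (hq.trans hy.symm)]
    exact ⟨hpI, hqI, hpq⟩
  · rintro ⟨h1, h2, h3⟩
    exact ⟨x, y, hx, hy, h1, h2, h3⟩

/-- The key local charge identity. -/
lemma chi_add (hI : IsLowerSet I) (h : IsLinExt L) {l : List ℕ} (hnd : l.Nodup)
    (hi : i ∈ l) (hsep : ∀ j ∈ l, j ≠ i → j ≠ i + 1 ∧ j + 1 ≠ i)
    (hx : L x = i) (hy : L y = i + 1) :
    (betaI I L i - betaI I L (i+1)) +
      (betaI I (tfold l L) i - betaI I (tfold l L) (i+1)) = 2 * deltaI I L i := by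
  set T := tfold l L with hT
  have hTlin : IsLinExt T := tfold_isLinExt _ h
  have hP := tfold_pair hnd hi hsep h hx hy
  have hb1 := betaI_eq (I := I) h hx
  have hb2 := betaI_eq (I := I) h hy
  rw [deltaI, descAt_iff h hx hy]
  by_cases hlt : x < y
  · rw [if_pos hlt] at hP
    have hc1 := betaI_eq (I := I) hTlin hP.1
    have hc2 := betaI_eq (I := I) hTlin hP.2
    rw [hb1, hb2, hc1, hc2]
    by_cases hxI : x ∈ I
    · by_cases hyI : y ∈ I
      · simp [hxI, hyI]
      · simp [hxI, hyI, hlt]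
    · have hyI : y ∉ I := fun hyI => hxI (hI (le_of_lt hlt) hyI)
      simp [hxI, hyI]
  · rw [if_neg hlt] at hP
    have hc1 := betaI_eq (I := I) hTlin hP.2
    have hc2 := betaI_eq (I := I) hTlin hP.1
    rw [hb1, hb2, hc1, hc2]
    have : ¬ (x ∈ I ∧ y ∉ I ∧ x < y) := fun ⟨_, _, h3⟩ => hlt h3
    rw [if_neg this]
    ring

end Charge

section Lists

/-- the list of positions of parity `b` -/
def pList (P : Type*) [Fintype P] (b : ℕ) : List ℕ :=
  (List.range' 1 (Fintype.card P - 1)).filter (fun i => i % 2 = b)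

lemma pList_nodup (b : ℕ) : (pList P b).Nodup :=
  (List.nodup_range').filter _

lemma mem_pList {b i : ℕ} : i ∈ pList P b ↔ (1 ≤ i ∧ i < 1 + (Fintype.card P - 1)) ∧ i % 2 = b := by
  simp only [pList, List.mem_filter, List.mem_range'_1, decide_eq_true_eq]

lemma pList_sep {b : ℕ} (hb : b < 2) {i : ℕ} (hi : i ∈ pList P b) :
    ∀ j ∈ pList P b, j ≠ i → j ≠ i + 1 ∧ j + 1 ≠ i := by
  intro j hj hne
  rw [mem_pList] at hi hj
  omega

lemma pList_range {b : ℕ} : ∀ i ∈ pList P b, 1 ≤ i ∧ i + 1 ≤ Fintype.card P := by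
  intro i hi
  rw [mem_pList] at hi
  omega

end Lists

section Telescope
variable {I : Set P} {L : P → ℕ}

lemma sum_telescope (f : ℕ → ℤ) {n : ℕ} (hn : 1 ≤ n) :
    ∑ i ∈ Finset.Icc 1 (n-1), (f i - f (i+1)) = f 1 - f n := by
  have h1 : Finset.Icc 1 (n-1) = Finset.Ico 1 n := by
    rw [← Finset.Ico_add_one_right_eq_Icc]
    congr 1
    omega
  rw [h1, Finset.sum_Ico_eq_sum_range]
  have h2 : ∑ i ∈ Finset.range (n - 1), (f (1 + i) - f (1 + (i+1)))
      = f (1 + 0) - f (1 + (n-1)) := Finset.sum_range_sub' (fun j => f (1 + j)) (n-1)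
  have h3 : 1 + (n - 1) = n := by omega
  rw [h3] at h2
  simpa [add_assoc] using h2

lemma betaI_one [OrderBot P] (hI : IsLowerSet I) (hne : I.Nonempty)
    (h : IsLinExt L) : betaI I L 1 = 1 := by
  have hcard : 1 ≤ Fintype.card P := Fintype.card_pos_iff.mpr ⟨⊥⟩
  obtain ⟨x, hx⟩ := linext_surj h (by simp [hcard] : 1 ∈ Set.Icc 1 (Fintype.card P))
  have hxbot : x = ⊥ := by
    by_contra hne'
    have := h.2 ⊥ x (Ne.bot_lt hne')
    have := (linext_mem h ⊥).1
    omega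
  rw [betaI_eq h hx, if_pos]
  obtain ⟨z, hz⟩ := hne
  exact hxbot ▸ hI bot_le hz

lemma betaI_card [OrderTop P] (hI : IsLowerSet I) (hproper : I ≠ Set.univ)
    (h : IsLinExt L) : betaI I L (Fintype.card P) = 0 := by
  have hcard : 1 ≤ Fintype.card P := Fintype.card_pos_iff.mpr ⟨⊤⟩
  obtain ⟨x, hx⟩ := linext_surj h (by simp [hcard] : Fintype.card P ∈ Set.Icc 1 (Fintype.card P))
  have hxtop : x = ⊤ := by
    by_contra hne'
    have := h.2 x ⊤ (Ne.lt_top hne')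
    have := (linext_mem h ⊤).2
    omega
  rw [betaI_eq h hx, if_neg]
  rw [hxtop]
  intro htop
  exact hproper (Set.eq_univ_of_forall fun z => hI le_top htop)

end Telescope

section DescCount
variable (I : Set P)

/-- the Finset of `I`-descents of `M` -/
def descF (M : P → ℕ) : Finset P := Finset.univ.filter (fun p => IDescent I M p)

variable {I}

lemma card_descF {M : P → ℕ} (h : IsLinExt M) :
    ((descF I M).card : ℤ) = ∑ i ∈ Finset.Icc 1 (Fintype.card P - 1), deltaI I M i := by
  have hbij : (descF I M).card
      = ((Finset.Icc 1 (Fintype.card P - 1)).filter (fun i => DescAt I M i)).card := by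
    apply Finset.card_bij (fun p _ => M p)
    · intro p hp
      rw [descF, Finset.mem_filter] at hp
      obtain ⟨-, hpI, q, hqI, hcov, hlab⟩ := hp
      rw [Finset.mem_filter, Finset.mem_Icc]
      have h1 := linext_mem h p
      have h2 := linext_mem h q
      simp only [Set.mem_Icc] at h1 h2
      refine ⟨⟨h1.1, by omega⟩, ⟨p, q, rfl, hlab, hpI, hqI, hcov.lt⟩⟩
    · intro p hp p' hp' hpp'
      exact linext_inj h hpp'
    · intro i hi
      rw [Finset.mem_filter] at hi
      obtain ⟨-, x, y, hx, hy, hxI, hyI, hxy⟩ := hi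
      refine ⟨x, ?_, hx⟩
      rw [descF, Finset.mem_filter]
      exact ⟨Finset.mem_univ x, hxI, y, hyI, covby_of_labels h hx hy hxy, by rw [hx, hy]⟩
  rw [hbij]
  unfold deltaI
  rw [Finset.sum_boole]

end DescCount

section Orbit
variable {L M : P → ℕ}

lemma tauLO_eq_tfold (L : P → ℕ) : tauLO L = tfold (pList P 1) L := rfl
lemma tauLE_eq_tfold (L : P → ℕ) : tauLE L = tfold (pList P 0) L := rfl

lemma isLinExt_tauLO (h : IsLinExt L) : IsLinExt (tauLO L) := tfold_isLinExt _ h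
lemma isLinExt_tauLE (h : IsLinExt L) : IsLinExt (tauLE L) := tfold_isLinExt _ h

lemma tauLO_tauLO (h : IsLinExt L) : tauLO (tauLO L) = L := by
  rw [tauLO_eq_tfold, tauLO_eq_tfold]
  exact tfold_tfold (pList_nodup 1) (fun i hi => pList_sep one_lt_two hi) pList_range h

lemma tauLE_tauLE (h : IsLinExt L) : tauLE (tauLE L) = L := by
  rw [tauLE_eq_tfold, tauLE_eq_tfold]
  exact tfold_tfold (pList_nodup 0) (fun i hi => pList_sep zero_lt_two hi) pList_range h

lemma mem_orbit_self (L : P → ℕ) : L ∈ OrbitL L := Relation.ReflTransGen.refl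

lemma orbit_tauLO_mem (hM : M ∈ OrbitL L) : tauLO M ∈ OrbitL L :=
  Relation.ReflTransGen.tail hM (Or.inl rfl)

lemma orbit_tauLE_mem (hM : M ∈ OrbitL L) : tauLE M ∈ OrbitL L :=
  Relation.ReflTransGen.tail hM (Or.inr rfl)

lemma orbit_linext (hL : IsLinExt L) (hM : M ∈ OrbitL L) : IsLinExt M := by
  induction hM with
  | refl => exact hL
  | tail h1 h2 ih =>
    rcases h2 with h2 | h2
    · exact h2 ▸ isLinExt_tauLO ih
    · exact h2 ▸ isLinExt_tauLE ih

lemma orbit_trans (hM : M ∈ OrbitL L) {M' : P → ℕ} (hM' : M' ∈ OrbitL M) :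
    M' ∈ OrbitL L := Relation.ReflTransGen.trans hM hM'

lemma orbit_symm (hL : IsLinExt L) (hM : M ∈ OrbitL L) : L ∈ OrbitL M := by
  induction hM with
  | refl => exact mem_orbit_self L
  | @tail b c h1 h2 ih =>
    have hb : IsLinExt b := orbit_linext hL h1
    have hcb : b = tauLO c ∨ b = tauLE c := by
      rcases h2 with h2 | h2
      · exact Or.inl (by rw [h2, tauLO_tauLO hb])
      · exact Or.inr (by rw [h2, tauLE_tauLE hb])
    have hstep : b ∈ OrbitL c := Relation.ReflTransGen.single hcb
    exact orbit_trans hstep ih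

lemma orbit_eq (hL : IsLinExt L) (hM : M ∈ OrbitL L) : OrbitL M = OrbitL L := by
  ext M'
  exact ⟨fun h' => orbit_trans hM h', fun h' => orbit_trans (orbit_symm hL hM) h'⟩

lemma finite_linext : {L : P → ℕ | IsLinExt L}.Finite := by
  apply Set.Finite.subset (Set.Finite.pi (fun _ : P => Set.finite_Icc 1 (Fintype.card P)))
  intro L hL
  exact Set.mem_pi.mpr (fun x _ => linext_mem hL x)

lemma orbit_finite (hL : IsLinExt L) : (OrbitL L).Finite :=
  finite_linext.subset (fun M hM => orbit_linext hL hM)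

end Orbit

section Main
variable [OrderBot P] [OrderTop P] {I : Set P} {L M : P → ℕ}

/-- the total charge of parity `b` -/
def chiS (I : Set P) (b : ℕ) (M : P → ℕ) : ℤ :=
  ∑ i ∈ (Finset.Icc 1 (Fintype.card P - 1)).filter (fun i => i % 2 = b),
    (betaI I M i - betaI I M (i+1))

lemma mem_fb_iff_pList {b i : ℕ} :
    i ∈ (Finset.Icc 1 (Fintype.card P - 1)).filter (fun i => i % 2 = b) ↔ i ∈ pList P b := by
  rw [Finset.mem_filter, Finset.mem_Icc, mem_pList]
  omega

lemma chiS_add (hI : IsLowerSet I) (h : IsLinExt M) {b : ℕ} (hb : b < 2) :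
    chiS I b M + chiS I b (tfold (pList P b) M)
      = 2 * ∑ i ∈ (Finset.Icc 1 (Fintype.card P - 1)).filter (fun i => i % 2 = b),
          deltaI I M i := by
  unfold chiS
  rw [← Finset.sum_add_distrib, Finset.mul_sum]
  apply Finset.sum_congr rfl
  intro i hi
  have hpl : i ∈ pList P b := mem_fb_iff_pList.mp hi
  have hrange := pList_range i hpl
  obtain ⟨x, hx⟩ := linext_surj h (show i ∈ Set.Icc 1 (Fintype.card P) by
    simp only [Set.mem_Icc]; omega)
  obtain ⟨y, hy⟩ := linext_surj h (show i + 1 ∈ Set.Icc 1 (Fintype.card P) by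
    simp only [Set.mem_Icc]; omega)
  exact chi_add hI h (pList_nodup b) hpl (pList_sep hb hpl) hx hy

lemma chiS_total (hI : IsLowerSet I) (hne : I.Nonempty) (hproper : I ≠ Set.univ)
    (h : IsLinExt M) : chiS I 1 M + chiS I 0 M = 1 := by
  have hcard : 1 ≤ Fintype.card P := Fintype.card_pos_iff.mpr ⟨⊥⟩
  have hsplit : chiS I 1 M + chiS I 0 M
      = ∑ i ∈ Finset.Icc 1 (Fintype.card P - 1), (betaI I M i - betaI I M (i+1)) := by
    unfold chiS
    rw [← Finset.sum_filter_add_sum_filter_not (Finset.Icc 1 (Fintype.card P - 1))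
      (fun i => i % 2 = 1)]
    congr 1
    apply Finset.sum_congr _ (fun _ _ => rfl)
    apply Finset.filter_congr
    intro i _
    omega
  rw [hsplit, sum_telescope (betaI I M) hcard, betaI_one hI hne h,
    betaI_card hI hproper h]
  ring

lemma sum_tau_reindex (hL : IsLinExt L) (g : (P → ℕ) → ℤ) (τ : (P → ℕ) → (P → ℕ))
    (hτmem : ∀ M ∈ OrbitL L, τ M ∈ OrbitL L)
    (hinv : ∀ M, IsLinExt M → τ (τ M) = M) :
    ∑ M ∈ (orbit_finite hL).toFinset, g (τ M)
      = ∑ M ∈ (orbit_finite hL).toFinset, g M := by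
  apply Finset.sum_nbij' (i := fun M => τ M) (j := fun M => τ M)
  · intro a ha
    rw [Set.Finite.mem_toFinset] at ha ⊢
    exact hτmem a ha
  · intro a ha
    rw [Set.Finite.mem_toFinset] at ha ⊢
    exact hτmem a ha
  · intro a ha
    rw [Set.Finite.mem_toFinset] at ha
    exact hinv a (orbit_linext hL ha)
  · intro a ha
    rw [Set.Finite.mem_toFinset] at ha
    exact hinv a (orbit_linext hL ha)
  · intro a _
    rfl

/-- The central counting identity: over each orbit, the total number of
`I`-descents equals the size of the orbit. -/
lemma main_count (hI : IsLowerSet I) (hne : I.Nonempty) (hproper : I ≠ Set.univ)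
    (hL : IsLinExt L) :
    ∑ M ∈ (orbit_finite hL).toFinset, ((descF I M).card : ℤ)
      = ((orbit_finite hL).toFinset.card : ℤ) := by
  set F := (orbit_finite hL).toFinset with hF
  have hlin : ∀ M ∈ F, IsLinExt M := fun M hM =>
    orbit_linext hL ((Set.Finite.mem_toFinset _).mp hM)
  have key : (2 : ℤ) * ∑ M ∈ F, ((descF I M).card : ℤ) = 2 * ∑ M ∈ F, 1 := by
    calc (2:ℤ) * ∑ M ∈ F, ((descF I M).card : ℤ)
        = ∑ M ∈ F, (2 * ((descF I M).card : ℤ)) := by rw [Finset.mul_sum]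
      _ = ∑ M ∈ F, (chiS I 1 M + chiS I 1 (tauLO M) + (chiS I 0 M + chiS I 0 (tauLE M))) := by
          apply Finset.sum_congr rfl
          intro M hM
          have h := hlin M hM
          rw [card_descF h]
          rw [← Finset.sum_filter_add_sum_filter_not (Finset.Icc 1 (Fintype.card P - 1))
            (fun i => i % 2 = 1) (deltaI I M), mul_add]
          rw [tauLO_eq_tfold, tauLE_eq_tfold,
            chiS_add hI h one_lt_two, chiS_add hI h zero_lt_two]
          congr 2
          apply Finset.sum_congr _ (fun _ _ => rfl)
          apply Finset.filter_congr
          intro i _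
          omega
      _ = ∑ M ∈ F, (chiS I 1 M + chiS I 1 M + (chiS I 0 M + chiS I 0 M)) := by
          rw [Finset.sum_add_distrib, Finset.sum_add_distrib, Finset.sum_add_distrib,
            Finset.sum_add_distrib, Finset.sum_add_distrib, Finset.sum_add_distrib,
            sum_tau_reindex hL (chiS I 1) tauLO (fun M hM => orbit_tauLO_mem hM)
              (fun M hM => tauLO_tauLO hM),
            sum_tau_reindex hL (chiS I 0) tauLE (fun M hM => orbit_tauLE_mem hM)
              (fun M hM => tauLE_tauLE hM)]
      _ = ∑ M ∈ F, (2 * (chiS I 1 M + chiS I 0 M)) := by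
          apply Finset.sum_congr rfl
          intro M _
          ring
      _ = ∑ M ∈ F, (2 * 1) := by
          apply Finset.sum_congr rfl
          intro M hM
          rw [chiS_total hI hne hproper (hlin M hM)]
      _ = 2 * ∑ M ∈ F, 1 := by rw [Finset.mul_sum]
  have h2 : (2:ℤ) ≠ 0 := two_ne_zero
  have := mul_left_cancel₀ h2 key
  rw [this, Finset.sum_const]
  simp

section Assembly
variable [OrderBot P] [OrderTop P] {I : Set P} {L : P → ℕ}

lemma card_orbit_ncard (hL : IsLinExt L) :
    (OrbitL L).ncard = (orbit_finite hL).toFinset.card :=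
  Set.ncard_eq_toFinset_card _ (orbit_finite hL)

lemma ncard_pairs (hI : IsLowerSet I) (hne : I.Nonempty) (hproper : I ≠ Set.univ)
    (hL : IsLinExt L) :
    {pl : P × (P → ℕ) | pl.2 ∈ OrbitL L ∧ IDescent I pl.2 pl.1}.ncard
      = (OrbitL L).ncard := by
  set F := (orbit_finite hL).toFinset with hF
  set G : Finset (P × (P → ℕ)) :=
    F.biUnion (fun M => (descF I M).image (fun p => (p, M))) with hG
  have hset : {pl : P × (P → ℕ) | pl.2 ∈ OrbitL L ∧ IDescent I pl.2 pl.1} = ↑G := by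
    ext ⟨p, M⟩
    simp only [Set.mem_setOf_eq, hG, Finset.coe_biUnion, Set.mem_iUnion,
      Finset.mem_coe, Finset.mem_image, Finset.mem_biUnion]
    constructor
    · rintro ⟨hM, hdes⟩
      refine ⟨M, (Set.Finite.mem_toFinset _).mpr hM, p, ?_, rfl⟩
      rw [descF, Finset.mem_filter]
      exact ⟨Finset.mem_univ p, hdes⟩
    · rintro ⟨M', hM', q, hq, heq⟩
      obtain ⟨rfl, rfl⟩ : q = p ∧ M' = M := by
        constructor <;> · injection heq <;> simp_all
      rw [descF, Finset.mem_filter] at hq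
      exact ⟨(Set.Finite.mem_toFinset _).mp hM', hq.2⟩
  rw [hset, Set.ncard_coe_finset, card_orbit_ncard hL]
  have hdisj : ∀ M ∈ F, ∀ M' ∈ F, M ≠ M' →
      Disjoint ((descF I M).image (fun p => (p, M)))
        ((descF I M').image (fun p => (p, M'))) := by
    intro M _ M' _ hne'
    rw [Finset.disjoint_left]
    rintro ⟨p, N⟩ h1 h2
    rw [Finset.mem_image] at h1 h2
    obtain ⟨q, -, hq⟩ := h1
    obtain ⟨q', -, hq'⟩ := h2
    apply hne'
    rw [← show N = M by injection hq <;> simp_all,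
      ← show N = M' by injection hq' <;> simp_all]
  rw [hG, Finset.card_biUnion hdisj]
  have himg : ∀ M, ((descF I M).image (fun p => (p, M))).card = (descF I M).card :=
    fun M => Finset.card_image_of_injective _ (fun a b hab => by injection hab)
  have hsum : ∑ M ∈ F, ((descF I M).image (fun p => (p, M))).card
      = ∑ M ∈ F, (descF I M).card := Finset.sum_congr rfl (fun M _ => himg M)
  rw [hsum]
  have := main_count hI hne hproper hL
  exact_mod_cast this

end Assembly

/-- Let `P` be a finite poset with unique minimal and maximal elements and let `I`
be a nonempty proper order ideal of `P`. Then there is a bijection, preserving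
orbits of the dihedral group `⟨τₒ, τₑ⟩`, between pairs `(p, L)` with `L` a linear
extension and `p` an `I`-descent of `L`, and linear extensions of `P`; in
particular the number of `I`-descents is homomesic with average one on every orbit. -/
theorem descents_homomesy {P : Type*} [Fintype P] [PartialOrder P]
    [OrderBot P] [OrderTop P]
    (I : Set P) (hI : IsLowerSet I) (hne : I.Nonempty) (hproper : I ≠ Set.univ) :
    (∃ Φ : {pl : P × (P → ℕ) // IsLinExt pl.2 ∧ IDescent I pl.2 pl.1} ≃
            {L : P → ℕ // IsLinExt L},
        ∀ x, (Φ x : P → ℕ) ∈ OrbitL x.1.2) ∧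
    (∀ L : P → ℕ, IsLinExt L →
      {pl : P × (P → ℕ) | pl.2 ∈ OrbitL L ∧ IDescent I pl.2 pl.1}.ncard
        = (OrbitL L).ncard) := by
  constructor
  · -- the bijection, via fiberwise counting over orbits
    haveI hBfin : Finite {L : P → ℕ // IsLinExt L} := by
      have := finite_linext (P := P)
      exact this.to_subtype
    haveI hAfin : Finite {pl : P × (P → ℕ) // IsLinExt pl.2 ∧ IDescent I pl.2 pl.1} := by
      apply Finite.of_injective
        (fun a => ((a.1.1, (⟨a.1.2, a.2.1⟩ : {L : P → ℕ // IsLinExt L})) :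
          P × {L : P → ℕ // IsLinExt L}))
      rintro ⟨⟨p, M⟩, hp⟩ ⟨⟨q, N⟩, hq⟩ hab
      simp only [Prod.mk.injEq, Subtype.mk.injEq] at hab
      exact Subtype.ext (Prod.ext hab.1 hab.2)
    set A := {pl : P × (P → ℕ) // IsLinExt pl.2 ∧ IDescent I pl.2 pl.1} with hA
    set B := {L : P → ℕ // IsLinExt L} with hB
    have hfib : ∀ S : Set (P → ℕ),
        Nonempty ({a : A // OrbitL a.1.2 = S} ≃ {b : B // OrbitL b.1 = S}) := by
      intro S
      by_cases hex : ∃ b : B, OrbitL b.1 = S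
      · obtain ⟨⟨L, hL⟩, hS⟩ := hex
        -- fiber over S in B ≃ orbit of L
        have hS' : OrbitL L = S := hS
        have e₂ : {b : B // OrbitL b.1 = S} ≃ ↥(OrbitL L) :=
          { toFun := fun b => ⟨b.1.1, by
              have h' : OrbitL (b.1.1 : P → ℕ) = OrbitL L := b.2.trans hS'.symm
              rw [← h']; exact mem_orbit_self _⟩
            invFun := fun M => ⟨⟨M.1, orbit_linext hL M.2⟩, by
              rw [← hS']; exact orbit_eq hL M.2⟩
            left_inv := fun b => by ext; rfl
            right_inv := fun M => by ext; rfl }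
        have e₁ : {a : A // OrbitL a.1.2 = S} ≃
            ↥{pl : P × (P → ℕ) | pl.2 ∈ OrbitL L ∧ IDescent I pl.2 pl.1} :=
          { toFun := fun a => ⟨a.1.1, by
              refine ⟨?_, a.1.2.2⟩
              have h' : OrbitL (a.1.1.2) = OrbitL L := a.2.trans hS'.symm
              rw [← h']; exact mem_orbit_self _⟩
            invFun := fun pl => ⟨⟨pl.1, orbit_linext hL pl.2.1, pl.2.2⟩, by
              rw [← hS']; exact orbit_eq hL pl.2.1⟩
            left_inv := fun a => by ext <;> rfl
            right_inv := fun pl => by ext <;> rfl }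
      -- now compare cardinalities
        have hcards : Nat.card {a : A // OrbitL a.1.2 = S}
            = Nat.card {b : B // OrbitL b.1 = S} := by
          rw [Nat.card_congr e₁, Nat.card_congr e₂, Nat.card_coe_set_eq,
            Nat.card_coe_set_eq, ncard_pairs hI hne hproper hL]
        haveI : Fintype {a : A // OrbitL a.1.2 = S} := Fintype.ofFinite _
        haveI : Fintype {b : B // OrbitL b.1 = S} := Fintype.ofFinite _
        rw [Nat.card_eq_fintype_card, Nat.card_eq_fintype_card] at hcards
        exact ⟨Fintype.equivOfCardEq hcards⟩
      · haveI : IsEmpty {b : B // OrbitL b.1 = S} := ⟨fun b => hex ⟨b.1, b.2⟩⟩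
        haveI : IsEmpty {a : A // OrbitL a.1.2 = S} :=
          ⟨fun a => hex ⟨⟨a.1.1.2, a.1.2.1⟩, a.2⟩⟩
        exact ⟨Equiv.equivOfIsEmpty _ _⟩
    refine ⟨Equiv.ofFiberEquiv (f := fun a : A => OrbitL a.1.2)
      (g := fun b : B => OrbitL b.1) (fun S => (hfib S).some), ?_⟩
    intro x
    have := Equiv.ofFiberEquiv_map (f := fun a : A => OrbitL a.1.2)
      (g := fun b : B => OrbitL b.1) (fun S => (hfib S).some) x
    rw [← this]
    exact mem_orbit_self _
  · intro L hL
    exact ncard_pairs hI hne hproper hL
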